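/- arXiv:1602.02440 — 2 statements merged into one kernel-verified Lean document; each statement's English description precedes it below -/
import Mathlib

section
/- Let p be prime, e a divisor of p-1, and n an integer not divisible by p. Then (φ(e)/e) · Σ_{d | e} (μ(d)/φ(d)) · Σ_{χ of order d} χ(n) equals 1 if n is e-free modulo p, and 0 otherwise. -/
open Finset

/-- An integer `n` coprime to `p` is `e`-free if `n ≡ m ^ d (mod p)` with `d ∣ e`
implies `d = 1`. -/
def IsEFree (p e : ℕ) (n : ℤ) : Prop :=
  ∀ (m : ℤ) (d : ℕ), d ∣ e → (n : ZMod p) = (m : ZMod p) ^ d → d = 1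

/-!
Let `S` be the set of `c` such that `n` is a `c`-th power modulo `p`. For `c ∣ p - 1` the
characters with `χ ^ c = 1` form the annihilator of the subgroup of `c`-th powers, which has
index `c`, so `∑_{χ ^ c = 1} χ(n) = c · [c ∈ S]`; grouping the characters by order and applying
Möbius inversion gives `∑_{ord χ = d} χ(n) = (μ ⋆ c·[c ∈ S])(d)`. Since `mn ∈ S ↔ m ∈ S ∧ n ∈ S`
for coprime `m, n`, the sum `∑_{d ∣ e} μ(d)/φ(d) · (μ ⋆ c·[c ∈ S])(d)` is multiplicative in `e`.
At `q ^ k` only `d = 1, q` contribute, giving `0` if `q ∈ S` and `q / (q - 1)` otherwise, so the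
sum is `e / φ(e)` if no prime factor of `e` lies in `S` and `0` otherwise; and `n` is `e`-free
exactly when no prime factor of `e` lies in `S`.
-/

open ArithmeticFunction
open scoped ArithmeticFunction.Moebius ArithmeticFunction.zeta

lemma exists_pow_eq_mul_iff {G : Type*} [CommGroup G] {u : G} {m n : ℕ} (h : m.Coprime n) :
    (∃ v, v ^ (m * n) = u) ↔ (∃ v, v ^ m = u) ∧ ∃ v, v ^ n = u := by
  refine ⟨fun ⟨v, hv⟩ => ⟨⟨v ^ n, by rw [← pow_mul, mul_comm, hv]⟩,
      ⟨v ^ m, by rw [← pow_mul, hv]⟩⟩,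
    fun ⟨⟨y, hy⟩, ⟨z, hz⟩⟩ => ⟨z ^ m.gcdA n * y ^ m.gcdB n, ?_⟩⟩
  have hbezout : (m : ℤ) * m.gcdA n + n * m.gcdB n = 1 := by
    rw [← Nat.gcd_eq_gcd_ab, h.gcd_eq_one, Nat.cast_one]
  calc (z ^ m.gcdA n * y ^ m.gcdB n) ^ (m * n)
      = (z ^ n) ^ ((m : ℤ) * m.gcdA n) * (y ^ m) ^ ((n : ℤ) * m.gcdB n) := by
        simp only [← zpow_natCast, ← zpow_mul, mul_zpow]
        push_cast
        ring_nf
    _ = u := by rw [hz, hy, ← zpow_add, hbezout, zpow_one]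

lemma sum_divisors_sum_orderOf_eq {G β : Type*} [Monoid G] [Fintype G] [DecidableEq G]
    [AddCommMonoid β] (f : G → β) {c : ℕ} (hc : c ≠ 0) :
    ∑ d ∈ c.divisors, ∑ g ∈ univ.filter (fun g : G => orderOf g = d), f g =
      ∑ g ∈ univ.filter (fun g : G => g ^ c = 1), f g := by
  simp_rw [← orderOf_dvd_iff_pow_eq_one]
  rw [← sum_fiberwise_of_maps_to (g := orderOf) (t := c.divisors)
    (fun g hg => Nat.mem_divisors.mpr ⟨(mem_filter.mp hg).2, hc⟩)]
  refine sum_congr rfl fun d hd => ?_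
  rw [filter_filter]
  refine sum_congr (filter_congr fun g _ => ?_) fun _ _ => rfl
  exact ⟨fun h => ⟨h ▸ Nat.dvd_of_mem_divisors hd, h⟩, And.right⟩

namespace ArithmeticFunction

noncomputable def idIndicator (R : Type*) [AddMonoidWithOne R] (S : Set ℕ) :
    ArithmeticFunction R :=
  ⟨S.indicator (↑), by simp⟩

lemma idIndicator_apply {R : Type*} [AddMonoidWithOne R] (S : Set ℕ) (c : ℕ) :
    idIndicator R S c = S.indicator (↑) c := rfl

end ArithmeticFunction

namespace MulChar

variable {M R : Type*} [CommMonoid M] [Finite M] [CommRing R]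
  [HasEnoughRootsOfUnity R (Monoid.exponent Mˣ)]

lemma subgroupOrderIsoSubgroupMulChar_range_powMonoidHom (c : ℕ) :
    (subgroupOrderIsoSubgroupMulChar M R (powMonoidHom c).range).ofDual =
      (powMonoidHom c : MulChar M R →* MulChar M R).ker := by
  ext χ
  simp only [mem_subgroupOrderIsoSubgroupMulChar_iff, MonoidHom.mem_range, powMonoidHom_apply,
    MonoidHom.mem_ker, forall_exists_index, forall_apply_eq_imp_iff, Units.val_pow_eq_pow_val,
    map_pow, ← pow_apply_coe]
  exact ⟨fun h => ext fun v => by rw [h, one_apply_coe], fun h v => by rw [h, one_apply_coe]⟩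

lemma exists_pow_eq_iff_forall_pow_eq_one_apply_eq_one (c : ℕ) (u : Mˣ) :
    (∃ v, v ^ c = u) ↔ ∀ χ : MulChar M R, χ ^ c = 1 → χ u = 1 := by
  let dual := subgroupOrderIsoSubgroupMulChar M R
  change u ∈ (powMonoidHom c).range ↔ _
  rw [← dual.symm_apply_apply (powMonoidHom c).range, ← OrderDual.toDual_ofDual (dual _),
    mem_subgroupOrderIsoSubgroupMulChar_symm_iff,
    subgroupOrderIsoSubgroupMulChar_range_powMonoidHom]
  simp only [MonoidHom.mem_ker, powMonoidHom_apply]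

variable [IsDomain R] [Fintype (MulChar M R)]

open Classical in
lemma sum_pow_eq_one_apply (c : ℕ) (u : Mˣ) :
    ∑ χ ∈ univ.filter (fun χ : MulChar M R => χ ^ c = 1), χ u =
      if ∃ v, v ^ c = u then ((powMonoidHom c : Mˣ →* Mˣ).range.index : R) else 0 := by
  set X := (powMonoidHom c : MulChar M R →* MulChar M R).ker with hX
  let ev : X →* R := ((mulCharEquiv M R).symm u).toMonoidHom.comp X.subtype
  have hev : ev = 1 ↔ ∃ v, v ^ c = u := by
    rw [exists_pow_eq_iff_forall_pow_eq_one_apply_eq_one (R := R), DFunLike.ext_iff]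
    simp [ev, X]
  have hcard : Fintype.card X = (powMonoidHom c : Mˣ →* Mˣ).range.index := by
    rw [Fintype.card_eq_nat_card, hX, ← subgroupOrderIsoSubgroupMulChar_range_powMonoidHom,
      card_subgroupOrderIsoSubgroupMulChar, Subgroup.index]
  calc ∑ χ ∈ univ.filter (fun χ : MulChar M R => χ ^ c = 1), χ u
      = ∑ χ : X, ev χ := by
        rw [sum_subtype (F := inferInstance) _ (p := (· ∈ X)) (fun χ => by simp [hX])]
        simp [ev]
    _ = _ := by rw [sum_hom_units, hcard]; simp only [hev]; split_ifs <;> simp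

theorem sum_orderOf_eq_apply [IsCyclic Mˣ] (u : Mˣ) {d : ℕ} (hd : d ∣ Nat.card Mˣ) :
    ∑ χ ∈ univ.filter (fun χ : MulChar M R => orderOf χ = d), χ u =
      (↑μ * idIndicator R {c | ∃ v, v ^ c = u}) d := by
  classical
  have hsum : ∀ c > 0, c ∣ Nat.card Mˣ →
      ∑ d ∈ c.divisors, ∑ χ ∈ univ.filter (fun χ : MulChar M R => orderOf χ = d), χ u =
        idIndicator R {c | ∃ v, v ^ c = u} c := by
    intro c hc hcN
    rw [sum_divisors_sum_orderOf_eq _ hc.ne', sum_pow_eq_one_apply,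
      IsCyclic.index_powMonoidHom_range, Nat.gcd_eq_right hcN, idIndicator_apply]
    simp only [Set.indicator_apply, Set.mem_ofPred_eq]
  rw [ArithmeticFunction.mul_apply, ← (sum_eq_iff_sum_mul_moebius_eq_on {m | m ∣ Nat.card Mˣ}
    (fun _ _ h h' => h.trans h')).mp hsum d (Nat.pos_of_dvd_of_pos hd Nat.card_pos) hd]
  simp only [intCoe_apply]

end MulChar

namespace ArithmeticFunction

lemma sum_divisors_prime_pow_moebius_mul {R : Type*} [CommRing R] (h : ℕ → R) {q k : ℕ}
    (hq : q.Prime) (hk : k ≠ 0) : ∑ d ∈ (q ^ k).divisors, (μ d : R) * h d = h 1 - h q := by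
  obtain ⟨j, rfl⟩ := Nat.exists_eq_add_one_of_ne_zero hk
  rw [Nat.sum_divisors_prime_pow hq, sum_range_succ', sum_range_succ', sum_eq_zero fun i _ => ?_]
  · simp [moebius_apply_prime hq, sub_eq_neg_add]
  · rw [moebius_apply_prime_pow hq (by omega), if_neg (by omega), Int.cast_zero, zero_mul]

lemma isMultiplicative_idIndicator {R : Type*} [CommSemiring R] {S : Set ℕ} (h1 : 1 ∈ S)
    (hS : ∀ {m n}, m.Coprime n → (m * n ∈ S ↔ m ∈ S ∧ n ∈ S)) :
    (idIndicator R S).IsMultiplicative := by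
  classical
  refine ⟨by simp [idIndicator_apply, h1], fun {m n} hmn => ?_⟩
  simp only [idIndicator_apply, Set.indicator_apply, hS hmn]
  split_ifs <;> simp_all

lemma moebius_mul_idIndicator_apply_prime {R : Type*} [CommRing R] {S : Set ℕ} (h1 : 1 ∈ S)
    {q : ℕ} (hq : q.Prime) :
    ((μ : ArithmeticFunction R) * idIndicator R S) q = S.indicator (↑) q - 1 := by
  rw [mul_apply, Nat.sum_divisorsAntidiagonal
      (fun x y => (μ : ArithmeticFunction R) x * idIndicator R S y), hq.divisors,
    sum_pair hq.one_lt.ne]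
  simp [idIndicator_apply, h1, moebius_apply_prime hq, Nat.div_self hq.pos, sub_eq_add_neg]

section

variable (K : Type*) [Field K]

noncomputable def moebiusDivTotient : ArithmeticFunction K :=
  ⟨fun d => μ d / d.totient, by simp⟩

noncomputable def idDivTotientIndicator (S : Set ℕ) : ArithmeticFunction K :=
  ⟨{e | ∀ q, q.Prime → q ∣ e → q ∉ S}.indicator fun e => (e / e.totient : K), by simp⟩

variable {K} {S : Set ℕ}

lemma moebiusDivTotient_apply (d : ℕ) : moebiusDivTotient K d = μ d / d.totient := rfl

lemma idDivTotientIndicator_apply (e : ℕ) : idDivTotientIndicator K S e =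
    {e | ∀ q, q.Prime → q ∣ e → q ∉ S}.indicator (fun e => (e / e.totient : K)) e := rfl

lemma isMultiplicative_moebiusDivTotient : (moebiusDivTotient K).IsMultiplicative := by
  refine ⟨by simp [moebiusDivTotient_apply], fun {m n} hmn => ?_⟩
  simp only [moebiusDivTotient_apply, isMultiplicative_moebius.map_mul_of_coprime hmn,
    Nat.totient_mul hmn, Int.cast_mul, Nat.cast_mul, mul_div_mul_comm]

lemma isMultiplicative_idDivTotientIndicator : (idDivTotientIndicator K S).IsMultiplicative := by
  classical
  refine ⟨?_, fun {m n} hmn => ?_⟩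
  · rw [idDivTotientIndicator_apply, Set.indicator_of_mem
      fun q hq hq1 => absurd (Nat.eq_one_of_dvd_one hq1) hq.ne_one]
    simp
  have hfree : (∀ q, q.Prime → q ∣ m * n → q ∉ S) ↔
      (∀ q, q.Prime → q ∣ m → q ∉ S) ∧ ∀ q, q.Prime → q ∣ n → q ∉ S :=
    ⟨fun h => ⟨fun q hq hd => h q hq (hd.mul_right n), fun q hq hd => h q hq (hd.mul_left m)⟩,
      fun h q hq hd => (hq.dvd_mul.mp hd).elim (h.1 q hq) (h.2 q hq)⟩
  simp only [idDivTotientIndicator_apply, Set.indicator_apply, Set.mem_ofPred_eq, hfree,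
    Nat.totient_mul hmn, Nat.cast_mul, mul_div_mul_comm]
  split_ifs <;> simp_all

variable [CharZero K]

open Classical in
lemma idDivTotientIndicator_apply_prime_pow {q k : ℕ} (hq : q.Prime) (hk : k ≠ 0) :
    idDivTotientIndicator K S (q ^ k) = if q ∈ S then 0 else q / (q - 1 : K) := by
  rw [idDivTotientIndicator_apply]
  by_cases hqS : q ∈ S
  · rw [if_pos hqS, Set.indicator_of_notMem
      fun h : ∀ r, r.Prime → r ∣ q ^ k → r ∉ S => h q hq (dvd_pow_self q hk) hqS]
  · rw [if_neg hqS, Set.indicator_of_mem fun r hr hrq =>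
      (Nat.prime_dvd_prime_iff_eq hr hq).mp (hr.dvd_of_dvd_pow hrq) ▸ hqS]
    obtain ⟨j, rfl⟩ := Nat.exists_eq_add_one_of_ne_zero hk
    have hq0 : (q : K) ≠ 0 := Nat.cast_ne_zero.mpr hq.ne_zero
    push_cast [Nat.totient_prime_pow_succ hq, Nat.cast_sub hq.one_le]
    rw [pow_succ, mul_div_mul_left _ _ (pow_ne_zero _ hq0)]

theorem pmul_moebiusDivTotient_moebius_mul_idIndicator_mul_zeta (h1 : 1 ∈ S)
    (hS : ∀ {m n}, m.Coprime n → (m * n ∈ S ↔ m ∈ S ∧ n ∈ S)) :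
    (moebiusDivTotient K).pmul (↑μ * idIndicator K S) * ζ = idDivTotientIndicator K S := by
  have hA := isMultiplicative_moebius.intCast.mul (isMultiplicative_idIndicator (R := K) h1 hS)
  have hL := (isMultiplicative_moebiusDivTotient.pmul hA).mul isMultiplicative_zeta.natCast
  have hH := isMultiplicative_idDivTotientIndicator (K := K) (S := S)
  rw [IsMultiplicative.eq_iff_eq_on_prime_powers _ hL _ hH]
  intro q k hq
  rcases eq_or_ne k 0 with rfl | hk
  · rw [pow_zero, hL.map_one, hH.map_one]
  rw [idDivTotientIndicator_apply_prime_pow hq hk, coe_mul_zeta_apply]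
  simp only [pmul_apply, moebiusDivTotient_apply, div_mul_eq_mul_div, mul_div_assoc]
  rw [sum_divisors_prime_pow_moebius_mul _ hq hk, moebius_mul_idIndicator_apply_prime h1 hq,
    hA.map_one, Nat.totient_one, Nat.totient_prime hq, Nat.cast_sub hq.one_le]
  have hq1 : (q : K) - 1 ≠ 0 := sub_ne_zero.mpr (Nat.cast_ne_one.mpr hq.ne_one)
  by_cases hqS : q ∈ S
  · rw [if_pos hqS, Set.indicator_of_mem hqS]
    push_cast
    rw [div_self hq1, div_one, sub_self]
  · rw [if_neg hqS, Set.indicator_of_notMem hqS]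
    push_cast
    field_simp
    ring

open Classical in
theorem totient_div_mul_sum_divisors_moebius_div_totient_mul (h1 : 1 ∈ S)
    (hS : ∀ {m n}, m.Coprime n → (m * n ∈ S ↔ m ∈ S ∧ n ∈ S)) {e : ℕ} (he : e ≠ 0) :
    (e.totient / e : K) *
        ∑ d ∈ e.divisors, (μ d / d.totient : K) * (↑μ * idIndicator K S) d =
      if ∀ q, q.Prime → q ∣ e → q ∉ S then 1 else 0 := by
  have h := congr_arg (· e)
    (pmul_moebiusDivTotient_moebius_mul_idIndicator_mul_zeta (K := K) h1 hS)
  simp only [coe_mul_zeta_apply, pmul_apply, moebiusDivTotient_apply] at h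
  rw [h, idDivTotientIndicator_apply, Set.indicator_apply]
  simp only [Set.mem_ofPred_eq]
  split_ifs
  · have : (e.totient : K) ≠ 0 :=
      Nat.cast_ne_zero.mpr (Nat.totient_pos.mpr (Nat.pos_of_ne_zero he)).ne'
    field_simp
  · rw [mul_zero]

end

end ArithmeticFunction

lemma isEFree_iff_forall_prime {p e : ℕ} [Fact p.Prime] {n : ℤ} {u : (ZMod p)ˣ}
    (hu : (u : ZMod p) = n) (he : e ≠ 0) :
    IsEFree p e n ↔ ∀ q, q.Prime → q ∣ e → q ∉ {c | ∃ v, v ^ c = u} := by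
  refine ⟨fun h q hq hqe ⟨v, hv⟩ => hq.ne_one (h ((v : ZMod p).cast) q hqe ?_),
    fun h m d hde hnm => ?_⟩
  · rw [ZMod.intCast_zmod_cast, ← hu, ← hv, Units.val_pow_eq_pow_val]
  by_contra hd1
  obtain ⟨q, hq, hqd⟩ := Nat.exists_prime_and_dvd hd1
  have hd0 : d ≠ 0 := fun hd => he (Nat.eq_zero_of_zero_dvd (hd ▸ hde))
  have hm : (m : ZMod p) ≠ 0 := fun hm => u.ne_zero (by rw [hu, hnm, hm, zero_pow hd0])
  refine h q hq (hqd.trans hde) ⟨Units.mk0 _ hm ^ (d / q), Units.ext ?_⟩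
  rw [← pow_mul, Nat.div_mul_cancel hqd, Units.val_pow_eq_pow_val, Units.val_mk0, hu, hnm]

open Classical in
/-- Indicator function for `e`-free residues: for `p` prime, `e ∣ p - 1` and `p ∤ n`,
`(φ(e)/e) · Σ_{d ∣ e} (μ(d)/φ(d)) · Σ_{χ of order d} χ(n)` equals `1` if `n` is
`e`-free modulo `p` and `0` otherwise. -/
theorem efree_indicator (p : ℕ) [Fact p.Prime] (e : ℕ) (he : e ∣ p - 1)
    (n : ℤ) (hn : ¬ (p : ℤ) ∣ n) :
    ((Nat.totient e : ℂ) / (e : ℂ)) *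
      ∑ d ∈ e.divisors, ((ArithmeticFunction.moebius d : ℂ) / (Nat.totient d : ℂ)) *
        ∑ χ ∈ Finset.univ.filter (fun χ : DirichletCharacter ℂ p => orderOf χ = d),
          χ (n : ZMod p)
    = if IsEFree p e n then 1 else 0 := by
  have hn0 : (n : ZMod p) ≠ 0 := by rwa [Ne, ZMod.intCast_zmod_eq_zero_iff_dvd]
  set u := Units.mk0 _ hn0
  have hu : (u : ZMod p) = n := Units.val_mk0 hn0
  have he0 : e ≠ 0 := by
    rintro rfl
    exact (Nat.sub_ne_zero_of_lt (Fact.out : p.Prime).one_lt) (Nat.eq_zero_of_zero_dvd he)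
  have hcard : Nat.card (ZMod p)ˣ = p - 1 := by rw [Nat.card_eq_fintype_card, ZMod.card_units]
  have hchar : ∀ d ∈ e.divisors,
      ∑ χ ∈ univ.filter (fun χ : DirichletCharacter ℂ p => orderOf χ = d), χ u =
        (↑μ * idIndicator ℂ {c | ∃ v, v ^ c = u}) d := fun d hd =>
    MulChar.sum_orderOf_eq_apply u (hcard ▸ (Nat.dvd_of_mem_divisors hd).trans he)
  rw [← hu, sum_congr rfl fun d hd => congr_arg _ (hchar d hd),
    totient_div_mul_sum_divisors_moebius_div_totient_mul
      (S := {c | ∃ v, v ^ c = u}) ⟨u, pow_one u⟩ exists_pow_eq_mul_iff he0,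
    isEFree_iff_forall_prime hu he0]
end

section
/- Let χ be a non-principal Dirichlet character modulo a prime p and x ≥ 1 a real number. Then |Σ_{n ≤ x, n square-free} χ(n)| ≤ 2 · x^{1/2} · p^{1/4} · (log p)^{1/2}. -/
/-!
Writing the indicator of square-freeness as `∑_{d² ∣ n} μ(d)` turns the sum into
`∑_d μ(d) χ(d)² S(N / d²)` with `S(M) = ∑_{m ≤ M} χ(m)`. Each `S(N / d²)` is bounded by the
Pólya–Vinogradov constant `A = √p log p` for `d ≤ D` and trivially by `N / d²` for `d > D`.
Since `∑_{d > D} d⁻² ≤ (D + 1/2)⁻¹`, the choice `D = ⌊√(x / A)⌋` gives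
`D A + x / (D + 1/2) ≤ 2 √(x A)`.
-/

open Finset Real

section Squarefree

open ArithmeticFunction ArithmeticFunction.Moebius

theorem Nat.dvd_of_sq_dvd_sq_mul_of_squarefree {a b d : ℕ} (ha : Squarefree a)
    (h : d ^ 2 ∣ b ^ 2 * a) : d ∣ b := by
  obtain ⟨d', b', hcop, hd, hb⟩ := Nat.exists_coprime d b
  generalize d.gcd b = g at hd hb
  rcases Nat.eq_zero_or_pos g with rfl | hg
  · simp [hb]
  have hd'a : d' ^ 2 ∣ a := by
    rw [hd, hb, mul_pow, mul_pow, mul_right_comm] at h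
    exact (hcop.pow 2 2).dvd_of_dvd_mul_left (Nat.dvd_of_mul_dvd_mul_right (pow_pos hg 2) h)
  have hd' : d' = 1 := Nat.isUnit_iff.mp (ha d' (sq d' ▸ hd'a))
  rw [hd, hb, hd', one_mul]
  exact dvd_mul_left _ _

theorem sum_moebius_filter_sq_dvd {n : ℕ} (hn : n ≠ 0) :
    ∑ d ∈ n.divisors with d ^ 2 ∣ n, μ d = if Squarefree n then 1 else 0 := by
  obtain ⟨a, b, -, hb, rfl, ha⟩ := Nat.sq_mul_squarefree_of_pos (Nat.pos_of_ne_zero hn)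
  have hdivisors : {d ∈ (b ^ 2 * a).divisors | d ^ 2 ∣ b ^ 2 * a} = b.divisors := by
    ext d
    simp only [mem_filter, Nat.mem_divisors, ne_eq, hn, not_false_eq_true, and_true,
      hb.ne']
    constructor
    · exact fun h => Nat.dvd_of_sq_dvd_sq_mul_of_squarefree ha h.2
    · intro h
      have h2 : d ^ 2 ∣ b ^ 2 * a := (pow_dvd_pow_of_dvd h 2).mul_right a
      exact ⟨(dvd_pow_self d two_ne_zero).trans h2, h2⟩
  have hsq : Squarefree (b ^ 2 * a) ↔ b = 1 := by
    refine ⟨fun h => Nat.isUnit_iff.mp (h b ?_), fun h => by simpa [h] using ha⟩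
    exact ⟨a, by ring⟩
  rw [hdivisors, ← coe_mul_zeta_apply, moebius_mul_coe_zeta, one_apply]
  exact if_congr hsq.symm rfl rfl

theorem sum_Icc_filter_dvd {M : Type*} [AddCommMonoid M] (g : ℕ → M) {k : ℕ} (hk : 0 < k)
    (N : ℕ) : ∑ n ∈ Icc 1 N with k ∣ n, g n = ∑ m ∈ Icc 1 (N / k), g (k * m) := by
  have himage : {n ∈ Icc 1 N | k ∣ n} = (Icc 1 (N / k)).image (k * ·) := by
    ext n
    simp only [mem_filter, mem_Icc, mem_image, Nat.le_div_iff_mul_le hk]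
    constructor
    · rintro ⟨⟨h1, hN⟩, m, rfl⟩
      exact ⟨m, ⟨Nat.pos_of_mul_pos_left h1, by linarith [mul_comm k m]⟩, rfl⟩
    · rintro ⟨m, ⟨h1, hm⟩, rfl⟩
      exact ⟨⟨Nat.mul_pos hk h1, by linarith [mul_comm k m]⟩, dvd_mul_right k m⟩
  rw [himage, sum_image fun a _ b _ h => Nat.eq_of_mul_eq_mul_left hk h]

theorem sum_Icc_filter_squarefree_eq {R : Type*} [CommRing R] (g : ℕ → R) (N : ℕ) :
    ∑ n ∈ Icc 1 N with Squarefree n, g n =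
      ∑ d ∈ Icc 1 N, (μ d : R) * ∑ m ∈ Icc 1 (N / d ^ 2), g (d ^ 2 * m) := by
  calc ∑ n ∈ Icc 1 N with Squarefree n, g n
      = ∑ n ∈ Icc 1 N, ∑ d ∈ n.divisors with d ^ 2 ∣ n, (μ d : R) * g n := by
        rw [sum_filter]
        refine sum_congr rfl fun n hn => ?_
        rw [← sum_mul, ← Int.cast_sum, sum_moebius_filter_sq_dvd (by grind)]
        split_ifs <;> simp
    _ = ∑ d ∈ Icc 1 N, ∑ n ∈ Icc 1 N with d ^ 2 ∣ n, (μ d : R) * g n := by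
        refine sum_comm' fun n d => ?_
        simp only [mem_filter, mem_Icc, Nat.mem_divisors]
        constructor
        · rintro ⟨⟨h1, hN⟩, ⟨hdn, -⟩, hd2⟩
          have := Nat.le_of_dvd h1 hdn
          exact ⟨⟨⟨h1, hN⟩, hd2⟩, Nat.pos_of_dvd_of_pos hdn h1, by omega⟩
        · rintro ⟨⟨⟨h1, hN⟩, hd2⟩, -⟩
          exact ⟨⟨h1, hN⟩, ⟨(dvd_pow_self d two_ne_zero).trans hd2, by omega⟩, hd2⟩
    _ = _ := by
        refine sum_congr rfl fun d hd => ?_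
        rw [← mul_sum, sum_Icc_filter_dvd _ (pow_pos (mem_Icc.1 hd).1 2)]

end Squarefree

section InverseSquares

variable {α : Type*} [Field α] [LinearOrder α] [IsStrictOrderedRing α]

theorem sum_Ioc_inv_sq_le_sub_half {k n : ℕ} (h : k ≤ n) :
    ∑ i ∈ Ioc k n, ((i : α) ^ 2)⁻¹ ≤ (k + 1 / 2 : α)⁻¹ - (n + 1 / 2 : α)⁻¹ := by
  induction n, h using Nat.le_induction with
  | base => simp
  | succ n hn IH =>
    rw [sum_Ioc_succ_top hn]
    grw [IH]
    push_cast
    have : (0 : α) < n + 1 / 2 := by positivity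
    field_simp
    nlinarith

theorem sum_Ioc_inv_sq_le_inv_add_half (k n : ℕ) :
    ∑ i ∈ Ioc k n, ((i : α) ^ 2)⁻¹ ≤ (k + 1 / 2 : α)⁻¹ := by
  rcases le_or_gt k n with h | h
  · grw [sum_Ioc_inv_sq_le_sub_half h]
    simp only [sub_le_self_iff, inv_nonneg]
    positivity
  · rw [Ioc_eq_empty_of_le h.le, sum_empty]
    positivity

end InverseSquares

theorem sum_Icc_min_div_sq_le {A x : ℝ} (hA : 0 ≤ A) (hx : 0 ≤ x) (D N : ℕ) :
    ∑ d ∈ Icc 1 N, min A (x / d ^ 2) ≤ D * A + x * (D + 1 / 2 : ℝ)⁻¹ := by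
  rw [← sum_filter_add_sum_filter_not _ (· ≤ D)]
  have htail : {d ∈ Icc 1 N | ¬d ≤ D} = Ioc D N := by
    ext d
    simp only [mem_filter, mem_Icc, mem_Ioc]
    omega
  gcongr
  · calc ∑ d ∈ Icc 1 N with d ≤ D, min A (x / d ^ 2)
        ≤ ∑ d ∈ Icc 1 N with d ≤ D, A := sum_le_sum fun _ _ => min_le_left _ _
      _ ≤ ∑ d ∈ Icc 1 D, A := by
          refine sum_le_sum_of_subset_of_nonneg (fun d => ?_) fun _ _ _ => hA
          simp only [mem_filter, mem_Icc]
          omega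
      _ = D * A := by simp
  · calc ∑ d ∈ Icc 1 N with ¬d ≤ D, min A (x / d ^ 2)
        ≤ ∑ d ∈ Ioc D N, x * ((d : ℝ) ^ 2)⁻¹ := by
          rw [htail]
          exact sum_le_sum fun _ _ => (min_le_right _ _).trans_eq (div_eq_mul_inv _ _)
      _ ≤ x * (D + 1 / 2 : ℝ)⁻¹ := by
          rw [← mul_sum]
          gcongr
          exact sum_Ioc_inv_sq_le_inv_add_half D N

theorem Nat.floor_add_sq_mul_inv_floor_add_half_le {y : ℝ} (hy : 0 ≤ y) :
    (⌊y⌋₊ : ℝ) + y ^ 2 * (⌊y⌋₊ + 1 / 2 : ℝ)⁻¹ ≤ 2 * y := by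
  have h0 : (⌊y⌋₊ : ℝ) ≤ y := Nat.floor_le hy
  have h1 : y < ⌊y⌋₊ + 1 := Nat.lt_floor_add_one y
  have : (0 : ℝ) < ⌊y⌋₊ + 1 / 2 := by positivity
  rw [← div_eq_mul_inv, ← sub_nonneg]
  have key : 2 * y - (⌊y⌋₊ + y ^ 2 / (⌊y⌋₊ + 1 / 2)) =
      ((y - ⌊y⌋₊) * (⌊y⌋₊ + 1 - y) + ⌊y⌋₊ / 2) / (⌊y⌋₊ + 1 / 2) := by
    field_simp
    ring
  rw [key]
  have : 0 ≤ (y - ⌊y⌋₊) * (⌊y⌋₊ + 1 - y) := mul_nonneg (by linarith) (by linarith)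
  positivity

theorem sum_Icc_min_div_sq_le_two_sqrt {A x : ℝ} (hA : 0 ≤ A) (hx : 0 ≤ x) (N : ℕ) :
    ∑ d ∈ Icc 1 N, min A (x / d ^ 2) ≤ 2 * √(x * A) := by
  rcases hA.eq_or_lt with rfl | hA
  · exact (sum_nonpos fun _ _ => min_le_left _ _).trans (by positivity)
  set y := √(x / A)
  have hy : 0 ≤ y := sqrt_nonneg _
  have hxy : x = y ^ 2 * A := by
    rw [sq_sqrt (div_nonneg hx hA.le), div_mul_cancel₀ _ hA.ne']
  calc ∑ d ∈ Icc 1 N, min A (x / d ^ 2)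
      ≤ ⌊y⌋₊ * A + x * (⌊y⌋₊ + 1 / 2 : ℝ)⁻¹ := sum_Icc_min_div_sq_le hA.le hx _ _
    _ = (⌊y⌋₊ + y ^ 2 * (⌊y⌋₊ + 1 / 2 : ℝ)⁻¹) * A := by rw [hxy]; ring
    _ ≤ 2 * y * A := by gcongr; exact Nat.floor_add_sq_mul_inv_floor_add_half_le hy
    _ = 2 * √(x * A) := by
        rw [hxy, show y ^ 2 * A * A = (y * A) ^ 2 by ring, sqrt_sq (by positivity), mul_assoc]

open ArithmeticFunction ArithmeticFunction.Moebius in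
theorem norm_sum_Icc_squarefree_le {f : ℕ → ℂ} (hf_mul : ∀ a b, f (a * b) = f a * f b)
    (hf_le : ∀ n, ‖f n‖ ≤ 1) {A : ℝ} (hA : ∀ M, ‖∑ m ∈ Icc 1 M, f m‖ ≤ A) (N : ℕ) :
    ‖∑ n ∈ Icc 1 N with Squarefree n, f n‖ ≤ 2 * √(N * A) := by
  have htrivial : ∀ M, ‖∑ m ∈ Icc 1 M, f m‖ ≤ M := fun M =>
    (norm_sum_le_of_le _ fun m _ => hf_le m).trans_eq (by simp)
  have hterm : ∀ d ∈ Icc 1 N,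
      ‖(μ d : ℂ) * ∑ m ∈ Icc 1 (N / d ^ 2), f (d ^ 2 * m)‖ ≤ min A (N / d ^ 2 : ℝ) := by
    intro d hd
    set S := ∑ m ∈ Icc 1 (N / d ^ 2), f m
    have hsum : ∑ m ∈ Icc 1 (N / d ^ 2), f (d ^ 2 * m) = f d ^ 2 * S := by
      simp only [S, mul_sum, sq, hf_mul]
    have hμ : ‖(μ d : ℂ)‖ ≤ 1 := by
      rw [Complex.norm_intCast]
      exact_mod_cast abs_moebius_le_one
    have hfd : ‖f d‖ ^ 2 ≤ 1 := pow_le_one₀ (norm_nonneg _) (hf_le d)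
    calc ‖(μ d : ℂ) * ∑ m ∈ Icc 1 (N / d ^ 2), f (d ^ 2 * m)‖
        ≤ 1 * (1 * ‖S‖) := by
          rw [hsum, norm_mul, norm_mul, norm_pow]
          gcongr
      _ ≤ min A (N / d ^ 2 : ℝ) := by
          rw [one_mul, one_mul]
          refine le_min (hA _) ((htrivial _).trans ?_)
          exact_mod_cast Nat.cast_div_le
  rw [sum_Icc_filter_squarefree_eq]
  calc _ ≤ ∑ d ∈ Icc 1 N, ‖(μ d : ℂ) * ∑ m ∈ Icc 1 (N / d ^ 2), f (d ^ 2 * m)‖ := norm_sum_le _ _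
    _ ≤ ∑ d ∈ Icc 1 N, min A (N / d ^ 2 : ℝ) := sum_le_sum hterm
    _ ≤ 2 * √(N * A) :=
        sum_Icc_min_div_sq_le_two_sqrt ((norm_nonneg _).trans (hA 0)) N.cast_nonneg N

theorem char_sum_squarefree_bound_general (p : ℕ)
    (χ : DirichletCharacter ℂ p)
    (hPV : ∀ M N : ℕ, ‖∑ n ∈ Finset.Ioc M N, χ (n : ZMod p)‖ ≤ Real.sqrt p * Real.log p)
    (x : ℝ) (hx : 1 ≤ x) :
    ‖∑ n ∈ (Finset.Icc 1 ⌊x⌋₊).filter (fun n => Squarefree n), χ (n : ZMod p)‖ ≤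
      2 * x ^ ((1 : ℝ) / 2) * (p : ℝ) ^ ((1 : ℝ) / 4) * (Real.log p) ^ ((1 : ℝ) / 2) := by
  have hx0 : 0 ≤ x := by linarith
  calc _ ≤ 2 * √(⌊x⌋₊ * (√p * log p)) :=
        norm_sum_Icc_squarefree_le (fun a b => by rw [Nat.cast_mul, map_mul])
          (fun n => χ.norm_le_one n) (fun M => by simpa using Icc_add_one_left_eq_Ioc 0 M ▸ hPV 0 M) ⌊x⌋₊
    _ ≤ 2 * √(x * (√p * log p)) := by
        gcongr
        exact Nat.floor_le hx0
    _ = _ := by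
        rw [sqrt_mul hx0, sqrt_mul (sqrt_nonneg _), sqrt_eq_rpow, sqrt_eq_rpow, sqrt_eq_rpow,
          sqrt_eq_rpow, ← rpow_mul (Nat.cast_nonneg _)]
        norm_num
        ring

/-- For a non-principal Dirichlet character `χ` modulo a prime `p` and real `x ≥ 1`,
assuming Pólya–Vinogradov, the sum of `χ(n)` over square-free positive `n ≤ x` is at
most `2 · x^{1/2} · p^{1/4} · (log p)^{1/2}` in absolute value. -/
theorem char_sum_squarefree_bound (p : ℕ) (hp : p.Prime) [Fact p.Prime]
    (χ : DirichletCharacter ℂ p) (hχ : χ ≠ 1)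
    (hPV : ∀ M N : ℕ, ‖∑ n ∈ Finset.Ioc M N, χ (n : ZMod p)‖ ≤ Real.sqrt p * Real.log p)
    (x : ℝ) (hx : 1 ≤ x) :
    ‖∑ n ∈ (Finset.Icc 1 ⌊x⌋₊).filter (fun n => Squarefree n), χ (n : ZMod p)‖ ≤
      2 * x ^ ((1 : ℝ) / 2) * (p : ℝ) ^ ((1 : ℝ) / 4) * (Real.log p) ^ ((1 : ℝ) / 2) :=
  char_sum_squarefree_bound_general p χ hPV x hx
end
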